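/- Let r ≥ 1 and m, n ≥ 2 be integers, let α ∈ (ℂˣ)^m and β ∈ (ℂˣ)^n, and consider the mn-tuple γ of all products α_i β_j. Suppose that: (i) the number of distinct values attained by |γ_k| is at most r + 1; (ii) the minimum multiplicity among these values is exactly 1 (some value of |γ_k| is attained exactly once); and (iii) at most one of these values has multiplicity greater than r. Then m ≤ r² + 1 and n ≤ r² + 1; in particular mn ≤ (r² + 1)². -/

import Mathlib

/-!
Write the moduli as `a i * b j` with `a i = ‖α i‖` and `b j = ‖β j‖` nonzero. If `(i₀, j₀)` is
the only index with modulus `a i₀ * b j₀`, then `a` attains `a i₀` only at `i₀` and `b` attains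
`b j₀` only at `j₀`; in particular `b` is not constant. A value of `a` attained more than `r` times
would make every value `a i * b j` of its row attained more than `r` times, and the row contains
two distinct values; hence every value of `a` is attained at most `r` times. As `a` takes at most
`r + 1` values, one of them only once, `m ≤ 1 + r · r`; symmetrically `n ≤ 1 + r · r`.
-/

open scoped Classical

open Finset

variable {ι κ M : Type*} [Fintype ι] [Fintype κ] [DecidableEq M]

theorem image_univ_comp_equiv [DecidableEq κ] (e : ι ≃ κ) (f : κ → M) :
    univ.image (f ∘ e) = univ.image f := by
  rw [← image_image, image_univ_equiv]

theorem card_filter_comp_equiv (e : ι ≃ κ) (f : κ → M) (v : M) :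
    #{i | f (e i) = v} = #{k | f k = v} := by
  rw [← card_map e.toEmbedding, map_filter]
  simp

theorem card_le_sq_add_one_of_card_fiber_le (f : ι → M) {r : ℕ} {i₀ : ι}
    (himage : #(univ.image f) ≤ r + 1) (hi₀ : ∀ i, f i = f i₀ → i = i₀)
    (hfiber : ∀ i, #{i' | f i' = f i} ≤ r) : Fintype.card ι ≤ r ^ 2 + 1 := by
  have hmem : f i₀ ∈ univ.image f := mem_image_of_mem f (mem_univ _)
  have hfiber₀ : #{i | f i = f i₀} = 1 :=
    card_eq_one.mpr ⟨i₀, by ext i; simpa using ⟨hi₀ i, fun h => h ▸ rfl⟩⟩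
  have herase : #((univ.image f).erase (f i₀)) ≤ r := by
    rw [card_erase_of_mem hmem]; omega
  calc Fintype.card ι = ∑ v ∈ univ.image f, #{i | f i = v} := card_eq_sum_card_image f univ
    _ = 1 + ∑ v ∈ (univ.image f).erase (f i₀), #{i | f i = v} := by
      rw [← add_sum_erase _ _ hmem, hfiber₀]
    _ ≤ 1 + #((univ.image f).erase (f i₀)) * r := by
      gcongr
      refine sum_le_card_nsmul _ _ _ fun v hv => ?_
      obtain ⟨i, -, rfl⟩ := mem_image.mp (mem_of_mem_erase hv)
      exact hfiber i
    _ ≤ r ^ 2 + 1 := by nlinarith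

theorem card_filter_eq_le_card_filter_mul_eq [Mul M] (a : ι → M) (b : κ → M) (i : ι) (j : κ) :
    #{i' | a i' = a i} ≤ #{p : ι × κ | a p.1 * b p.2 = a i * b j} :=
  card_le_card_of_injOn (·, j) (fun i' hi' => by simp_all) fun _ _ _ _ h => congrArg Prod.fst h

theorem card_image_le_card_image_mul [MulZeroClass M] [IsRightCancelMulZero M]
    (a : ι → M) (b : κ → M) {j : κ} (hj : b j ≠ 0) :
    #(univ.image a) ≤ #(univ.image fun p : ι × κ => a p.1 * b p.2) :=
  card_le_card_of_injOn (· * b j) (fun x hx => by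
      obtain ⟨i, -, rfl⟩ := mem_image.mp hx
      exact mem_image_of_mem _ (mem_univ (i, j)))
    fun _ _ _ _ h => mul_right_cancel₀ hj h

theorem card_left_le_sq_add_one [MulZeroClass M] [IsCancelMulZero M] (a : ι → M) (b : κ → M)
    {r : ℕ} (ha : ∀ i, a i ≠ 0) (hb : ∀ j, b j ≠ 0) (hκ : 1 < Fintype.card κ)
    (himage : #(univ.image fun p : ι × κ => a p.1 * b p.2) ≤ r + 1)
    (hunique : ∃ v ∈ univ.image fun p : ι × κ => a p.1 * b p.2,
      #{p : ι × κ | a p.1 * b p.2 = v} = 1)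
    (hheavy : #((univ.image fun p : ι × κ => a p.1 * b p.2).filter
      fun v => r < #{p : ι × κ | a p.1 * b p.2 = v}) ≤ 1) :
    Fintype.card ι ≤ r ^ 2 + 1 := by
  obtain ⟨v, -, hv⟩ := hunique
  obtain ⟨⟨i₀, j₀⟩, hp₀⟩ := card_eq_one.mp hv
  have hfiber_v (p : ι × κ) : a p.1 * b p.2 = v ↔ p = (i₀, j₀) := by
    simpa using Finset.ext_iff.mp hp₀ p
  have hv₀ : a i₀ * b j₀ = v := (hfiber_v _).2 rfl
  have hi₀ (i : ι) (h : a i = a i₀) : i = i₀ :=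
    congrArg Prod.fst <| (hfiber_v (i, j₀)).1 (by rw [h, hv₀])
  have hj₀ (j : κ) (h : b j = b j₀) : j = j₀ :=
    congrArg Prod.snd <| (hfiber_v (i₀, j)).1 (by rw [h, hv₀])
  obtain ⟨j₁, hj₁⟩ := Fintype.exists_ne_of_one_lt_card hκ j₀
  have hfiber (i : ι) : #{i' | a i' = a i} ≤ r := by
    by_contra! hlt
    have hheavy_row (j : κ) : a i * b j ∈ (univ.image fun p : ι × κ => a p.1 * b p.2).filter
        fun v => r < #{p : ι × κ | a p.1 * b p.2 = v} :=
      mem_filter.mpr ⟨mem_image_of_mem _ (mem_univ (i, j)),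
        hlt.trans_le (card_filter_eq_le_card_filter_mul_eq a b i j)⟩
    have hne : a i * b j₀ ≠ a i * b j₁ := fun h => hj₁ (hj₀ _ (mul_left_cancel₀ (ha i) h).symm)
    exact hheavy.not_gt (one_lt_card.mpr ⟨_, hheavy_row j₀, _, hheavy_row j₁, hne⟩)
  exact card_le_sq_add_one_of_card_fiber_le a
    ((card_image_le_card_image_mul a b (hb j₀)).trans himage) hi₀ hfiber

theorem card_right_le_sq_add_one [CommMonoidWithZero M] [IsCancelMulZero M]
    (a : ι → M) (b : κ → M)
    {r : ℕ} (ha : ∀ i, a i ≠ 0) (hb : ∀ j, b j ≠ 0) (hι : 1 < Fintype.card ι)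
    (himage : #(univ.image fun p : ι × κ => a p.1 * b p.2) ≤ r + 1)
    (hunique : ∃ v ∈ univ.image fun p : ι × κ => a p.1 * b p.2,
      #{p : ι × κ | a p.1 * b p.2 = v} = 1)
    (hheavy : #((univ.image fun p : ι × κ => a p.1 * b p.2).filter
      fun v => r < #{p : ι × κ | a p.1 * b p.2 = v}) ≤ 1) :
    Fintype.card κ ≤ r ^ 2 + 1 := by
  have hswap : (fun p : κ × ι => b p.1 * a p.2) =
      (fun p : ι × κ => a p.1 * b p.2) ∘ Equiv.prodComm κ ι :=
    funext fun p => mul_comm _ _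
  have hfiber (v : M) : #{p : κ × ι | b p.1 * a p.2 = v} = #{p : ι × κ | a p.1 * b p.2 = v} := by
    rw [← card_filter_comp_equiv (Equiv.prodComm κ ι)]
    simp only [Equiv.prodComm_apply, Prod.fst_swap, Prod.snd_swap, mul_comm]
    rfl
  have himage_swap : univ.image (fun p : κ × ι => b p.1 * a p.2) =
      univ.image fun p : ι × κ => a p.1 * b p.2 := by
    rw [hswap, image_univ_comp_equiv]
  apply card_left_le_sq_add_one b a hb ha hι <;> simpa only [himage_swap, hfiber]

theorem stmt_8_general (r m n : ℕ) (hm : 2 ≤ m) (hn : 2 ≤ n)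
    (α : Fin m → ℂ) (β : Fin n → ℂ)
    (hα : ∀ i, α i ≠ 0) (hβ : ∀ j, β j ≠ 0)
    (h1 : (Finset.univ.image fun p : Fin m × Fin n =>
        ‖α p.1 * β p.2‖).card ≤ r + 1)
    (h2 : ∃ v ∈ Finset.univ.image fun p : Fin m × Fin n => ‖α p.1 * β p.2‖,
      (Finset.univ.filter fun p : Fin m × Fin n => ‖α p.1 * β p.2‖ = v).card = 1)
    (h3 : ((Finset.univ.image fun p : Fin m × Fin n => ‖α p.1 * β p.2‖).filter
        fun v => r < (Finset.univ.filter fun p : Fin m × Fin n =>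
          ‖α p.1 * β p.2‖ = v).card).card ≤ 1) :
    m ≤ r ^ 2 + 1 ∧ n ≤ r ^ 2 + 1 ∧ m * n ≤ (r ^ 2 + 1) ^ 2 := by
  simp only [norm_mul] at h1 h2 h3
  have ha i : ‖α i‖ ≠ 0 := norm_ne_zero_iff.mpr (hα i)
  have hb j : ‖β j‖ ≠ 0 := norm_ne_zero_iff.mpr (hβ j)
  have hM := card_left_le_sq_add_one _ _ ha hb (by rwa [Fintype.card_fin]) h1 h2 h3
  have hN := card_right_le_sq_add_one _ _ ha hb (by rwa [Fintype.card_fin]) h1 h2 h3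
  rw [Fintype.card_fin] at hM hN
  exact ⟨hM, hN, sq (r ^ 2 + 1) ▸ Nat.mul_le_mul hM hN⟩

/-- tensor-indecomposability criterion.  Let `γ` be the `mn`-tuple
of products `α_i β_j` (`m, n ≥ 2`, entries nonzero).  If the moduli `|γ_k|`
attain at most `r + 1` distinct values, some value is attained exactly once,
and at most one value has multiplicity `> r`, then `m ≤ r²+1`, `n ≤ r²+1`, and
`mn ≤ (r²+1)²`. -/
theorem stmt_8 (r m n : ℕ) (hr : 1 ≤ r) (hm : 2 ≤ m) (hn : 2 ≤ n)
    (α : Fin m → ℂ) (β : Fin n → ℂ)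
    (hα : ∀ i, α i ≠ 0) (hβ : ∀ j, β j ≠ 0)
    (h1 : (Finset.univ.image fun p : Fin m × Fin n =>
        ‖α p.1 * β p.2‖).card ≤ r + 1)
    (h2 : ∃ v ∈ Finset.univ.image fun p : Fin m × Fin n => ‖α p.1 * β p.2‖,
      (Finset.univ.filter fun p : Fin m × Fin n => ‖α p.1 * β p.2‖ = v).card = 1)
    (h3 : ((Finset.univ.image fun p : Fin m × Fin n => ‖α p.1 * β p.2‖).filter
        fun v => r < (Finset.univ.filter fun p : Fin m × Fin n =>
          ‖α p.1 * β p.2‖ = v).card).card ≤ 1) :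
    m ≤ r ^ 2 + 1 ∧ n ≤ r ^ 2 + 1 ∧ m * n ≤ (r ^ 2 + 1) ^ 2 :=
  stmt_8_general r m n hm hn α β hα hβ h1 h2 h3
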